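/- arXiv:math/0611923 — 2 statements merged into one kernel-verified Lean document; each statement's English description precedes it below -/
import Mathlib

section
/- For every n ≥ 1, the number of permutations π ∈ S_n that avoid the generalized pattern 3-21 and satisfy π_n = n equals the Bell number B_{n-1}; and for every k with 1 ≤ k ≤ n-1, the number of permutations π ∈ S_n that avoid 3-21 and satisfy π_n = k equals ∇^{n-k-1}(B_{n-1}) = Σ_{i=0}^{n-k-1} (-1)^i · C(n-k-1, i) · B_{n-1-i}. -/
/-!
Delete the last entry `p` of `π ∈ S_{m+2}` and standardise the rest to `σ ∈ S_{m+1}`. An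
occurrence of 3-21 in `π` either lies inside `σ` or uses the last two positions, and the latter
happens exactly when the last entry of `σ` is at least `p` and is not its maximum. So the number
`a(m, k)` of avoiders in `S_{m+1}` ending in `k` (values `0`-based) satisfies `a(m+1, 0) = a(m, m)`,
`a(m+1, k+1) = a(m+1, k) + a(m, k)` for `k < m`, and `a(m+1, m+1) = a(m+1, m)`.

On the Bell side, `B_{x+1} = ∑ C(x, k) B_k` says that `Δ^m B` at `1` is `B_m`, and
`Δ^{j+1} B y = Δ^j B (y+1) - Δ^j B y`. These are the same recurrences, whence `a(m, m) = B_m` and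
`a(m, k) = Δ^{m-1-k} B (k+1)`, which is `∇^{m-1-k} B_m`.
-/

/-- `π` avoids the generalized pattern 3-21. -/
def Avoids3d21 {n : ℕ} (π : Equiv.Perm (Fin n)) : Prop :=
  ¬ ∃ (i j : Fin n) (h : j.1 + 1 < n), i < j ∧ π ⟨j.1 + 1, h⟩ < π j ∧ π j < π i

/-- The `m`-th Bell number: the number of partitions of a set with `m` elements,
equivalently the number of equivalence relations (setoids) on `Fin m`. -/
noncomputable def bell (m : ℕ) : ℕ := Nat.card (Setoid (Fin m))

open Finset Equiv fwdDiff

def Equiv.setoidCongr {α β : Type*} (e : α ≃ β) : Setoid α ≃ Setoid β where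
  toFun r := r.comap e.symm
  invFun r := r.comap e
  left_inv r := by ext; simp [Setoid.comap_rel]
  right_inv r := by ext; simp [Setoid.comap_rel]

namespace Setoid

variable {α : Type*}

instance [Finite α] : Finite (Setoid α) :=
  Finite.of_injective _ fun _ _ => Setoid.eq_iff_rel_eq.2

open Classical in
noncomputable def noneBlock [Fintype α] (r : Setoid (Option α)) : Finset α :=
  {a | r (some a) none}

def extendNone [DecidableEq α] (s : Finset α) (t : Setoid {a // a ∉ s}) :
    Option α → Option (Quotient t)
  | none => none
  | some a => if h : a ∈ s then none else some ⟦⟨a, h⟩⟧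

lemma ker_extendNone_comap [Fintype α] [DecidableEq α] (r : Setoid (Option α)) :
    ker (extendNone (noneBlock r) (r.comap fun a => some a.1)) = r := by
  have mem (a : α) : a ∈ noneBlock r ↔ r (some a) none := by simp [noneBlock]
  ext x y
  rcases x with _ | a <;> rcases y with _ | b
  · simp
  · simp [ker_def, extendNone, mem, r.comm' (x := none)]
  · simp [ker_def, extendNone, mem]
  · by_cases ha : r (some a) none <;> by_cases hb : r (some b) none
    all_goals simp_all [ker_def, extendNone, Quotient.eq, comap_rel]
    · exact r.trans' ha (r.symm' hb)
    · exact fun hab => hb (r.trans' (r.symm' hab) ha)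
    · exact fun hab => ha (r.trans' hab hb)

/-- A partition of `Option α` is the block of `none` together with a partition of the rest. -/
noncomputable def noneBlockFiberEquiv [Fintype α] [DecidableEq α] (s : Finset α) :
    {r : Setoid (Option α) // noneBlock r = s} ≃ Setoid {a // a ∉ s} where
  toFun r := r.1.comap fun a => some a.1
  invFun t := ⟨ker (extendNone s t), by
    ext a
    by_cases h : a ∈ s <;> simp [noneBlock, ker_def, extendNone, h]⟩
  left_inv := by
    rintro ⟨r, rfl⟩
    exact Subtype.ext (ker_extendNone_comap r)
  right_inv t := by
    ext a b
    simp only [comap_rel, ker_def, extendNone, dif_neg a.2, dif_neg b.2, Option.some_inj,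
      Quotient.eq]

end Setoid

lemma natCard_setoid_option {α : Type*} [Fintype α] :
    Nat.card (Setoid (Option α)) = ∑ s : Finset α, Nat.card (Setoid {a // a ∉ s}) := by
  classical
  rw [← Nat.card_congr (Equiv.sigmaFiberEquiv Setoid.noneBlock), Nat.card_sigma]
  exact sum_congr rfl fun s _ => Nat.card_congr (Setoid.noneBlockFiberEquiv s)

theorem natCard_setoid_eq_bell (α : Type*) [Finite α] :
    Nat.card (Setoid α) = Nat.bell (Nat.card α) := by
  induction h : Nat.card α using Nat.strong_induction_on generalizing α with
  | _ n ih =>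
  cases n with
  | zero =>
    have := Finite.card_eq_zero_iff.1 h
    rw [Nat.bell_zero]
    exact Nat.card_eq_one_iff_unique.2
      ⟨⟨fun _ _ => Setoid.ext fun x => isEmptyElim (α := α) x⟩, ⟨⊥⟩⟩
  | succ m =>
    classical
    have := Fintype.ofFinite α
    obtain ⟨a⟩ : Nonempty α := (Nat.card_pos_iff.1 (by omega)).1
    have hm : Fintype.card {b // b ≠ a} = m := by
      have := Nat.card_congr (Equiv.optionSubtypeNe a)
      rw [Finite.card_option, h, Nat.card_eq_fintype_card] at this
      omega
    calc Nat.card (Setoid α) = Nat.card (Setoid (Option {b // b ≠ a})) :=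
          Nat.card_congr (Equiv.optionSubtypeNe a).symm.setoidCongr
      _ = ∑ s ∈ (univ : Finset {b // b ≠ a}).powerset, Nat.bell (m - #s) := by
          rw [natCard_setoid_option, powerset_univ]
          refine sum_congr rfl fun s _ => ih _ (by omega) _ ?_
          simp [Nat.card_eq_fintype_card, Fintype.card_subtype_compl, hm]
      _ = ∑ i ∈ range (m + 1), m.choose i * Nat.bell (m - i) := by
          rw [sum_powerset_apply_card (fun i => Nat.bell (m - i)), card_univ, hm]
          simp
      _ = Nat.bell (m + 1) := by rw [Nat.bell_succ, Nat.range_succ_eq_Iic]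

lemma bell_eq_natBell (m : ℕ) : bell m = Nat.bell m := by
  rw [bell, natCard_setoid_eq_bell, Nat.card_fin]

lemma Nat.bell_succ_eq_sum_choose_mul {x N : ℕ} (hx : x < N) :
    Nat.bell (x + 1) = ∑ k ∈ range N, x.choose k * Nat.bell k := by
  have hsupp : range (x + 1) ⊆ range N := range_subset_range.2 hx
  rw [Nat.bell_succ, ← Nat.range_succ_eq_Iic, ← sum_range_reflect, ← sum_subset hsupp]
  · refine sum_congr rfl fun k hk => ?_
    have hk := mem_range.1 hk
    rw [show x + 1 - 1 - k = x - k by omega, Nat.choose_symm (by omega),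
      Nat.sub_sub_self (by omega)]
  · intro k _ hk
    rw [Nat.choose_eq_zero_of_lt (by simpa using hk), zero_mul]

/-- The Bell recurrence says that `x ↦ B (x + 1)` is the binomial transform of `B`, and `Δ^m` at `0`
extracts the `m`-th coefficient of a binomial transform. -/
lemma fwdDiff_iter_bell_one (m : ℕ) :
    Δ_[1] ^[m] (fun x => (Nat.bell x : ℤ)) 1 = Nat.bell m := by
  have hbell (x : ℕ) (hx : x ∈ range (m + 1)) :
      (Nat.bell (x + 1) : ℤ) = ∑ k ∈ range (m + 1), (Nat.bell k : ℤ) • (x.choose k : ℤ) := by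
    rw [Nat.bell_succ_eq_sum_choose_mul (mem_range.1 hx)]
    push_cast
    exact sum_congr rfl fun k _ => by rw [smul_eq_mul, mul_comm]
  calc Δ_[1] ^[m] (fun x => (Nat.bell x : ℤ)) 1
      = Δ_[1] ^[m] (fun x => (Nat.bell (x + 1) : ℤ)) 0 := by
        rw [fwdDiff_iter_comp_add 1 (fun x => (Nat.bell x : ℤ)) 1 m 0, zero_add]
    _ = Δ_[1] ^[m] (∑ k ∈ range (m + 1), (Nat.bell k : ℤ) • fun x => (x.choose k : ℤ)) 0 := by
        simp only [fwdDiff_iter_eq_sum_shift, zero_add, smul_eq_mul, mul_one]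
        exact sum_congr rfl fun x hx => by rw [hbell x hx]; simp
    _ = Nat.bell m := by
        rw [fwdDiff_iter_finsetSum, Finset.sum_apply]
        simp only [fwdDiff_iter_const_smul, Pi.smul_apply, fwdDiff_iter_choose_zero, smul_ite,
          smul_zero]
        simp

lemma fwdDiff_iter_eq_sum_backward (f : ℕ → ℤ) (j y : ℕ) :
    Δ_[1] ^[j] f y = ∑ i ∈ range (j + 1), (-1) ^ i * (j.choose i : ℤ) * f (y + j - i) := by
  rw [fwdDiff_iter_eq_sum_shift, ← sum_range_reflect]
  refine sum_congr rfl fun i hi => ?_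
  have hi := mem_range.1 hi
  rw [show j + 1 - 1 - i = j - i by omega, Nat.choose_symm (by omega),
    show j - (j - i) = i by omega, smul_eq_mul, smul_eq_mul, mul_one,
    show y + (j - i) = y + j - i by omega]

lemma fwdDiff_iter_succ_apply (f : ℕ → ℤ) (j y : ℕ) :
    Δ_[1] ^[j + 1] f y = Δ_[1] ^[j] f (y + 1) - Δ_[1] ^[j] f y := by
  rw [Function.iterate_succ_apply', fwdDiff]

section Permutations

variable {n : ℕ}

def Occurs3d21At (π : Perm (Fin (n + 1))) (j : Fin n) : Prop :=
  ∃ i < j.castSucc, π j.succ < π j.castSucc ∧ π j.castSucc < π i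

lemma avoids3d21_iff_forall_not_occurs3d21At (π : Perm (Fin (n + 1))) :
    Avoids3d21 π ↔ ∀ j, ¬Occurs3d21At π j := by
  constructor
  · rintro h j ⟨i, hij, hdesc, hi⟩
    exact h ⟨i, j.castSucc, by simp, hij, hdesc, hi⟩
  · rintro h ⟨i, j, hj, hij, hdesc, hi⟩
    exact h ⟨j, by omega⟩ ⟨i, hij, hdesc, hi⟩

/-- Appends the value `p` to `σ`, shifting the values `≥ p` of `σ` up by one. -/
def insertLast (p : Fin (n + 1)) (σ : Perm (Fin n)) : Perm (Fin (n + 1)) :=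
  (finSuccEquiv' (Fin.last n)).trans (σ.optionCongr.trans (finSuccEquiv' p).symm)

section InsertLast

variable (p : Fin (n + 1)) (σ : Perm (Fin n))

@[simp]
lemma insertLast_last : insertLast p σ (Fin.last n) = p := by
  simp [insertLast, finSuccEquiv'_at, finSuccEquiv'_symm_none]

@[simp]
lemma insertLast_castSucc (i : Fin n) : insertLast p σ i.castSucc = p.succAbove (σ i) := by
  simp [insertLast, finSuccEquiv'_last_apply_castSucc, finSuccEquiv'_symm_some]

lemma insertLast_injective : Function.Injective (insertLast p) := fun σ τ h =>
  Equiv.ext fun i => Fin.succAbove_right_injective (p := p) (by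
    simpa using DFunLike.congr_fun h i.castSucc)

lemma exists_insertLast_eq (π : Perm (Fin (n + 1))) : ∃ σ, insertLast (π (Fin.last n)) σ = π := by
  set e : Perm (Option (Fin n)) :=
    (finSuccEquiv' (Fin.last n)).symm.trans (π.trans (finSuccEquiv' (π (Fin.last n)))) with he
  have he_none : e none = none := by simp [he, finSuccEquiv'_symm_none]
  refine ⟨removeNone e, ?_⟩
  rw [insertLast, map_equiv_removeNone, he_none, swap_self, ← Perm.one_def, one_mul, he]
  ext1 x
  simp

end InsertLast

lemma Fin.exists_lt_castSucc_iff {P : Fin (n + 1) → Prop} {x : Fin n} :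
    (∃ i < x.castSucc, P i) ↔ ∃ i < x, P i.castSucc := by
  constructor
  · rintro ⟨i, hi, h⟩
    obtain ⟨i, rfl⟩ := Fin.exists_castSucc_eq.2 (Fin.ne_last_of_lt hi)
    exact ⟨i, Fin.castSucc_lt_castSucc_iff.1 hi, h⟩
  · rintro ⟨i, hi, h⟩
    exact ⟨i.castSucc, Fin.castSucc_lt_castSucc_iff.2 hi, h⟩

section Avoidance

variable (p : Fin (n + 2)) (σ : Perm (Fin (n + 1)))

lemma occurs3d21At_insertLast_castSucc (j : Fin n) :
    Occurs3d21At (insertLast p σ) j.castSucc ↔ Occurs3d21At σ j := by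
  simp only [Occurs3d21At, Fin.succ_castSucc, Fin.exists_lt_castSucc_iff, insertLast_castSucc,
    Fin.succAbove_lt_succAbove_iff]

lemma exists_lt_last_apply_last_lt_iff :
    (∃ i < Fin.last n, σ (Fin.last n) < σ i) ↔ σ (Fin.last n) ≠ Fin.last n := by
  constructor
  · rintro ⟨i, -, hi⟩
    exact (hi.trans_le (Fin.le_last _)).ne
  · intro h
    refine ⟨σ.symm (Fin.last n), ?_, by simpa [Fin.lt_last_iff_ne_last] using h⟩
    rw [Fin.lt_last_iff_ne_last, Ne, Equiv.symm_apply_eq]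
    exact h.symm

lemma occurs3d21At_insertLast_last :
    Occurs3d21At (insertLast p σ) (Fin.last n) ↔
      p ≤ (σ (Fin.last n)).castSucc ∧ σ (Fin.last n) ≠ Fin.last n := by
  rw [← exists_lt_last_apply_last_lt_iff]
  simp only [Occurs3d21At, Fin.succ_last, Fin.exists_lt_castSucc_iff, insertLast_castSucc,
    insertLast_last, Fin.lt_succAbove_iff_le_castSucc, Fin.succAbove_lt_succAbove_iff]
  exact ⟨fun ⟨i, hi, hp, hσ⟩ => ⟨hp, i, hi, hσ⟩, fun ⟨hp, i, hi, hσ⟩ => ⟨i, hi, hp, hσ⟩⟩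

theorem avoids3d21_insertLast_iff :
    Avoids3d21 (insertLast p σ) ↔
      Avoids3d21 σ ∧ ((σ (Fin.last n)).castSucc < p ∨ σ (Fin.last n) = Fin.last n) := by
  rw [avoids3d21_iff_forall_not_occurs3d21At, avoids3d21_iff_forall_not_occurs3d21At,
    Fin.forall_fin_succ', occurs3d21At_insertLast_last]
  simp only [occurs3d21At_insertLast_castSucc, not_and_or, not_le, not_not]

end Avoidance

end Permutations

/-- Values are `0`-based: the paper's condition `π_{m+1} = k + 1` is `π (Fin.last m) = k` here. -/
noncomputable def avoidCount (m k : ℕ) : ℕ :=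
  Nat.card {π : Perm (Fin (m + 1)) // Avoids3d21 π ∧ (π (Fin.last m) : ℕ) = k}

lemma avoidCount_zero_zero : avoidCount 0 0 = 1 :=
  Nat.card_eq_one_iff_unique.2
    ⟨⟨fun _ _ => Subtype.ext (Equiv.ext fun _ => Subsingleton.elim (α := Fin 1) _ _)⟩,
      ⟨⟨1, fun ⟨_, _, h, _⟩ => by omega, rfl⟩⟩⟩

lemma natCard_avoids3d21_last_eq_sum_avoidCount (m : ℕ) (C : ℕ → Prop) [DecidablePred C] :
    Nat.card {σ : Perm (Fin (m + 1)) // Avoids3d21 σ ∧ C (σ (Fin.last m))} =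
      ∑ j ∈ (range (m + 1)).filter C, avoidCount m j := by
  classical
  simp only [avoidCount, Nat.card_eq_fintype_card, Fintype.card_subtype]
  rw [card_eq_sum_card_fiberwise (f := fun σ => (σ (Fin.last m) : ℕ))]
  · refine sum_congr rfl fun j hj => ?_
    rw [filter_filter]
    refine congrArg card (filter_congr fun σ _ => ?_)
    have hC := (mem_filter.1 hj).2
    constructor
    · exact fun ⟨⟨hσ, _⟩, hj⟩ => ⟨hσ, hj⟩
    · rintro ⟨hσ, rfl⟩
      exact ⟨⟨hσ, hC⟩, rfl⟩
  · intro σ hσ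
    exact mem_filter.2 ⟨mem_range.2 (σ (Fin.last m)).isLt, (mem_filter.1 hσ).2.2⟩

lemma avoidCount_succ_eq_natCard (m p : ℕ) (hp : p < m + 2) :
    avoidCount (m + 1) p =
      Nat.card {σ : Perm (Fin (m + 1)) // Avoids3d21 σ ∧
        ((σ (Fin.last m) : ℕ) < p ∨ (σ (Fin.last m) : ℕ) = m)} := by
  have hcond (σ : Perm (Fin (m + 1))) :
      Avoids3d21 (insertLast ⟨p, hp⟩ σ) ↔
        Avoids3d21 σ ∧ ((σ (Fin.last m) : ℕ) < p ∨ (σ (Fin.last m) : ℕ) = m) := by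
    rw [avoids3d21_insertLast_iff, Fin.lt_def, Fin.ext_iff]
    rfl
  symm
  refine Nat.card_eq_of_bijective
    (fun σ => ⟨insertLast ⟨p, hp⟩ σ, (hcond σ).2 σ.2, by simp⟩) ⟨?_, ?_⟩
  · exact fun σ τ h => Subtype.ext (insertLast_injective _ (congrArg Subtype.val h))
  · rintro ⟨π, hπ, hlast⟩
    obtain ⟨σ, hσ⟩ := exists_insertLast_eq π
    rw [show π (Fin.last (m + 1)) = ⟨p, hp⟩ from Fin.ext hlast] at hσ
    subst hσ
    exact ⟨⟨σ, (hcond σ).1 hπ⟩, rfl⟩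

lemma avoidCount_succ (m p : ℕ) (hp : p ≤ m + 1) :
    avoidCount (m + 1) p = avoidCount m m + ∑ j ∈ range (min p m), avoidCount m j := by
  have hfilter : (range (m + 1)).filter (fun j => j < p ∨ j = m) = insert m (range (min p m)) := by
    ext j
    simp only [mem_filter, mem_range, mem_insert]
    omega
  rw [avoidCount_succ_eq_natCard m p (by omega), natCard_avoids3d21_last_eq_sum_avoidCount m
    (fun j => j < p ∨ j = m), hfilter, sum_insert (by simp)]

lemma avoidCount_succ_zero (m : ℕ) : avoidCount (m + 1) 0 = avoidCount m m := by
  simp [avoidCount_succ m 0 (by omega)]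

lemma avoidCount_succ_succ {m k : ℕ} (hk : k < m) :
    avoidCount (m + 1) (k + 1) = avoidCount (m + 1) k + avoidCount m k := by
  rw [avoidCount_succ m (k + 1) (by omega), avoidCount_succ m k (by omega), min_eq_left (by omega),
    min_eq_left (by omega), sum_range_succ, add_assoc]

lemma avoidCount_succ_self (m : ℕ) : avoidCount (m + 1) (m + 1) = avoidCount (m + 1) m := by
  rw [avoidCount_succ m (m + 1) le_rfl, avoidCount_succ m m (by omega), min_eq_right (by omega),
    min_self]

theorem avoidCount_eq_bell_and_fwdDiff (m : ℕ) :
    (avoidCount m m : ℤ) = Nat.bell m ∧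
      ∀ k < m, (avoidCount m k : ℤ) = Δ_[1] ^[m - 1 - k] (fun x => (Nat.bell x : ℤ)) (k + 1) := by
  induction m with
  | zero => simp [avoidCount_zero_zero]
  | succ m ih =>
    have row (k : ℕ) (hk : k ≤ m) :
        (avoidCount (m + 1) k : ℤ) = Δ_[1] ^[m - k] (fun x => (Nat.bell x : ℤ)) (k + 1) := by
      induction k with
      | zero => rw [avoidCount_succ_zero, ih.1, fwdDiff_iter_bell_one, Nat.sub_zero]
      | succ k ihk =>
        rw [avoidCount_succ_succ (by omega), Nat.cast_add, ihk (by omega), ih.2 k (by omega),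
          show m - k = m - (k + 1) + 1 by omega, fwdDiff_iter_succ_apply,
          show m - 1 - k = m - (k + 1) by omega]
        ring
    refine ⟨?_, fun k hk => row k (by omega)⟩
    rw [avoidCount_succ_self, row m le_rfl, Nat.sub_self]
    rfl

theorem bell_distribution (n : ℕ) (hn : 1 ≤ n) :
    Nat.card {π : Equiv.Perm (Fin n) // Avoids3d21 π ∧ π ⟨n - 1, by omega⟩ = ⟨n - 1, by omega⟩} = bell (n - 1) ∧
    ∀ k : ℕ, (hk1 : 1 ≤ k) → (hk2 : k ≤ n - 1) →
      (Nat.card {π : Equiv.Perm (Fin n) // Avoids3d21 π ∧ π ⟨n - 1, by omega⟩ = ⟨k - 1, by omega⟩} : ℤ) =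
        ∑ i ∈ Finset.range (n - k), (-1 : ℤ) ^ i * (((n - k - 1)).choose i) * (bell (n - 1 - i) : ℤ) := by
  obtain ⟨m, rfl⟩ : ∃ m, n = m + 1 := ⟨n - 1, by omega⟩
  simp only [Fin.ext_iff, add_tsub_cancel_right, bell_eq_natBell]
  refine ⟨by exact_mod_cast (avoidCount_eq_bell_and_fwdDiff m).1, fun k hk1 hk2 => ?_⟩
  change (avoidCount m (k - 1) : ℤ) = _
  rw [(avoidCount_eq_bell_and_fwdDiff m).2 (k - 1) (by omega), fwdDiff_iter_eq_sum_backward,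
    show m - 1 - (k - 1) = m + 1 - k - 1 by omega, show m + 1 - k - 1 + 1 = m + 1 - k by omega]
  refine sum_congr rfl fun i _ => ?_
  rw [show k - 1 + 1 + (m + 1 - k - 1) - i = m - i by omega]
end

section
/- For every n ≥ 1 and every k with 1 ≤ k ≤ n, the number N of permutations π ∈ S_n that avoid the generalized pattern 31-2 and satisfy π_1 = k is the ballot number (k/n)·C(2n-k-1, n-1); equivalently, n · N = k · C(2n-k-1, n-1). -/
/-- `π` avoids the generalized pattern 31-2. -/
def Avoids31d2 {n : ℕ} (π : Equiv.Perm (Fin n)) : Prop :=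
  ¬ ∃ (i j : Fin n) (h : i.1 + 1 < n), i.1 + 1 < j.1 ∧ π ⟨i.1 + 1, h⟩ < π j ∧ π j < π i

open Equiv Fin

instance {n : ℕ} : DecidablePred (Avoids31d2 (n := n)) := fun _ => by
  unfold Avoids31d2; infer_instance

/-- number of avoiders of `Fin (n+1)` with first value `a` -/
noncomputable def F (n : ℕ) (a : Fin (n + 1)) : ℕ :=
  Nat.card {π : Equiv.Perm (Fin (n + 1)) // Avoids31d2 π ∧ π ⟨0, Nat.succ_pos n⟩ = a}

/-- val-level description of succAbove -/
lemma succAbove_val {n : ℕ} (a : Fin (n + 2)) (x : Fin (n + 1)) :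
    (x.1 < a.1 ∧ (a.succAbove x).1 = x.1) ∨ (a.1 ≤ x.1 ∧ (a.succAbove x).1 = x.1 + 1) := by
  rcases lt_or_ge (castSucc x) a with h | h
  · left
    rw [Fin.succAbove_of_castSucc_lt _ _ h]
    exact ⟨h, rfl⟩
  · right
    rw [Fin.succAbove_of_le_castSucc _ _ h]
    exact ⟨h, rfl⟩

section del

variable {n : ℕ} (a : Fin (n + 2))

/-- insert value `a` at front -/
def ins (σ : Perm (Fin (n + 1))) : Perm (Fin (n + 2)) :=
  (finSuccEquiv (n + 1)).trans ((σ.optionCongr).trans (finSuccEquiv' a).symm)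

lemma ins_zero (σ : Perm (Fin (n + 1))) : ins a σ ⟨0, Nat.succ_pos _⟩ = a := by
  have : (⟨0, Nat.succ_pos _⟩ : Fin (n + 2)) = 0 := rfl
  simp [ins, this]

lemma ins_succ (σ : Perm (Fin (n + 1))) (i : Fin (n + 1)) :
    ins a σ i.succ = a.succAbove (σ i) := by
  simp [ins, finSuccEquiv'_symm_some]

/-- delete the front -/
def del (π : Perm (Fin (n + 2))) : Perm (Fin (n + 1)) :=
  Equiv.removeNone ((finSuccEquiv (n + 1)).symm.trans (π.trans (finSuccEquiv' a)))

lemma del_apply (π : Perm (Fin (n + 2))) (hπ : π ⟨0, Nat.succ_pos _⟩ = a) (i : Fin (n + 1)) :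
    a.succAbove (del a π i) = π i.succ := by
  have h0 : (⟨0, Nat.succ_pos _⟩ : Fin (n + 2)) = 0 := rfl
  rw [h0] at hπ
  set E := (finSuccEquiv (n + 1)).symm.trans (π.trans (finSuccEquiv' a)) with hE
  have hne : E (some i) ≠ none := by
    simp only [hE, Equiv.trans_apply, finSuccEquiv_symm_some]
    intro hcon
    have : π i.succ = a := by
      have := congrArg (finSuccEquiv' a).symm hcon
      simpa [finSuccEquiv'_symm_none] using this
    exact (Fin.succ_ne_zero i) (π.injective (this.trans hπ.symm))
  obtain ⟨y, hy⟩ := Option.ne_none_iff_exists'.mp hne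
  have hsome : some (del a π i) = E (some i) :=
    Equiv.removeNone_some _ ⟨y, hy⟩
  have : E (some i) = finSuccEquiv' a (π i.succ) := by
    simp [hE, finSuccEquiv_symm_some]
  rw [this] at hsome
  have := congrArg (finSuccEquiv' a).symm hsome
  simpa [finSuccEquiv'_symm_some] using this

lemma del_ins (σ : Perm (Fin (n + 1))) : del a (ins a σ) = σ := by
  apply Equiv.ext
  intro i
  have := del_apply a (ins a σ) (ins_zero a σ) i
  rw [ins_succ] at this
  exact Fin.succAbove_right_injective this

lemma ins_del (π : Perm (Fin (n + 2))) (hπ : π ⟨0, Nat.succ_pos _⟩ = a) :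
    ins a (del a π) = π := by
  apply Equiv.ext
  intro x
  induction x using Fin.cases with
  | zero => rw [show (0 : Fin (n+2)) = ⟨0, Nat.succ_pos _⟩ from rfl, ins_zero, hπ]
  | succ i => rw [ins_succ, del_apply a π hπ]

/-- avoidance transfer -/
lemma avoids_ins (b : Fin (n + 1)) (hb : b.1 + 1 = a.1) (σ : Perm (Fin (n + 1)))
    (h0 : σ ⟨0, Nat.succ_pos _⟩ = b) : Avoids31d2 (ins a σ) ↔ Avoids31d2 σ := by
  constructor
  · intro hins
    rintro ⟨i, j, h, hij, h1, h2⟩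
    refine hins ⟨i.succ, j.succ, Nat.succ_lt_succ h, Nat.succ_lt_succ hij, ?_, ?_⟩
    · have e : (⟨i.succ.1 + 1, Nat.succ_lt_succ h⟩ : Fin (n + 2)) = Fin.succ ⟨i.1 + 1, h⟩ := rfl
      rw [e, ins_succ, ins_succ, Fin.succAbove_lt_succAbove_iff]
      exact h1
    · rw [ins_succ, ins_succ, Fin.succAbove_lt_succAbove_iff]
      exact h2
  · intro hσ
    rintro ⟨i, j, h, hij, h1, h2⟩
    have hj0 : 0 < j.1 := by omega
    set j' : Fin (n + 1) := ⟨j.1 - 1, by omega⟩ with hj'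
    have hjs : j = j'.succ := by
      apply Fin.ext
      simp only [Fin.val_succ, hj']
      omega
    rcases Nat.eq_zero_or_pos i.1 with hi0 | hip
    · have hi : i = ⟨0, Nat.succ_pos _⟩ := Fin.ext hi0
      have e1 : (⟨i.1 + 1, h⟩ : Fin (n + 2)) = Fin.succ ⟨0, Nat.succ_pos _⟩ := by
        apply Fin.ext; simp [hi0]
      rw [e1, ins_succ, h0] at h1
      rw [hjs, ins_succ] at h1 h2
      rw [hi, ins_zero] at h2
      rw [Fin.lt_def] at h1 h2
      rcases succAbove_val a b with ⟨c1, c2⟩ | ⟨c1, c2⟩ <;>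
        rcases succAbove_val a (σ j') with ⟨d1, d2⟩ | ⟨d1, d2⟩ <;> omega
    · have hmlt : (i.1 - 1) + 1 < n + 1 := by omega
      set iσ : Fin (n + 1) := ⟨i.1 - 1, by omega⟩ with hiσ
      have e0 : i = Fin.succ iσ := by apply Fin.ext; simp [hiσ]; omega
      have e1 : (⟨i.1 + 1, h⟩ : Fin (n + 2)) = Fin.succ ⟨(i.1 - 1) + 1, hmlt⟩ := by
        apply Fin.ext; simp; omega
      rw [e1, ins_succ] at h1
      rw [hjs, ins_succ] at h1 h2
      rw [e0, ins_succ] at h2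
      rw [Fin.succAbove_lt_succAbove_iff] at h1 h2
      exact hσ ⟨iσ, j', hmlt, by simp [hiσ, hj']; omega, h1, h2⟩

end del

section swap

variable {n : ℕ} (v w : Fin (n + 2)) (hw : w.1 = v.1 + 1)

lemma swap_val (x : Fin (n + 2)) :
    (x.1 = v.1 ∧ ((Equiv.swap v w) x).1 = w.1) ∨ (x.1 = w.1 ∧ ((Equiv.swap v w) x).1 = v.1) ∨
      (x.1 ≠ v.1 ∧ x.1 ≠ w.1 ∧ ((Equiv.swap v w) x).1 = x.1) := by
  rcases eq_or_ne x v with rfl | hxv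
  · left; rw [Equiv.swap_apply_left]; exact ⟨rfl, rfl⟩
  · rcases eq_or_ne x w with rfl | hxw
    · right; left; rw [Equiv.swap_apply_right]; exact ⟨rfl, rfl⟩
    · right; right
      rw [Equiv.swap_apply_of_ne_of_ne hxv hxw]
      exact ⟨fun h => hxv (Fin.ext h), fun h => hxw (Fin.ext h), rfl⟩

end swap

section patterns

variable {n : ℕ}

lemma first_gap (π : Perm (Fin (n + 2))) (hA : Avoids31d2 π) :
    (π ⟨0, Nat.succ_pos _⟩).1 ≤ (π ⟨1, Nat.succ_lt_succ (Nat.succ_pos _)⟩).1 + 1 := by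
  by_contra hlt
  push_neg at hlt
  set x1 := π ⟨1, Nat.succ_lt_succ (Nat.succ_pos _)⟩ with hx1
  set u : Fin (n + 2) := ⟨x1.1 + 1, by omega⟩ with hu
  set p := π.symm u with hp
  have hpu : π p = u := π.apply_symm_apply u
  have hp0 : p.1 ≠ 0 := by
    intro hc
    have : π ⟨0, Nat.succ_pos _⟩ = u := by rw [← hpu]; congr 1; exact (Fin.ext hc).symm
    have := congrArg Fin.val this
    simp only [hu] at this
    omega
  have hp1 : p.1 ≠ 1 := by
    intro hc
    have : x1 = u := by rw [hx1, ← hpu]; congr 1; exact (Fin.ext hc).symm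
    have := congrArg Fin.val this
    simp only [hu] at this
    omega
  refine hA ⟨⟨0, Nat.succ_pos _⟩, p, Nat.succ_lt_succ (Nat.succ_pos _),
    by show 0 + 1 < p.1; omega, ?_, ?_⟩
  · rw [hpu, Fin.lt_def]
    exact Nat.lt_succ_self _
  · rw [hpu, Fin.lt_def]
    show x1.1 + 1 < _
    omega

variable (v w : Fin (n + 2))

lemma swap_avoid_fwd (hw : w.1 = v.1 + 1) (π : Perm (Fin (n + 2))) (hA : Avoids31d2 π)
    (h0 : π ⟨0, Nat.succ_pos _⟩ = v)
    (h1c : (π ⟨1, Nat.succ_lt_succ (Nat.succ_pos _)⟩).1 + 1 ≠ v.1) :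
    Avoids31d2 (π.trans (Equiv.swap v w)) := by
  rintro ⟨i, j, h, hij, hlt1, hlt2⟩
  simp only [Equiv.trans_apply] at hlt1 hlt2
  have Hx := swap_val v w (π ⟨i.1 + 1, h⟩)
  have Hy := swap_val v w (π j)
  have Hz := swap_val v w (π i)
  rw [Fin.lt_def] at hlt1 hlt2
  have hno : ¬((π ⟨i.1 + 1, h⟩).1 < (π j).1 ∧ (π j).1 < (π i).1) := fun hc =>
    hA ⟨i, j, h, hij, Fin.lt_def.mpr hc.1, Fin.lt_def.mpr hc.2⟩
  have hfg := first_gap π hA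
  rw [h0] at hfg
  have key : ((π i).1 = v.1 ∧ (π ⟨i.1 + 1, h⟩).1 < v.1) ∨ (π j).1 = v.1 := by omega
  rcases key with ⟨hz, hx⟩ | hy
  · have hi0 : i = ⟨0, Nat.succ_pos _⟩ :=
      π.injective (show π i = π ⟨0, Nat.succ_pos _⟩ by rw [h0]; exact Fin.ext hz)
    have hiv : i.1 = 0 := congrArg Fin.val hi0
    have hidx : (⟨i.1 + 1, h⟩ : Fin (n + 2)) = ⟨1, Nat.succ_lt_succ (Nat.succ_pos _)⟩ := by
      apply Fin.ext; simp [hiv]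
    rw [hidx] at hx
    omega
  · have hj0 : j = ⟨0, Nat.succ_pos _⟩ :=
      π.injective (show π j = π ⟨0, Nat.succ_pos _⟩ by rw [h0]; exact Fin.ext hy)
    have := congrArg Fin.val hj0
    simp only [] at this
    omega

lemma swap_avoid_bwd (hw : w.1 = v.1 + 1) (τ : Perm (Fin (n + 2))) (hA : Avoids31d2 τ)
    (h0 : τ ⟨0, Nat.succ_pos _⟩ = w) :
    Avoids31d2 (τ.trans (Equiv.swap v w)) := by
  rintro ⟨i, j, h, hij, hlt1, hlt2⟩
  simp only [Equiv.trans_apply] at hlt1 hlt2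
  have Hx := swap_val v w (τ ⟨i.1 + 1, h⟩)
  have Hy := swap_val v w (τ j)
  have Hz := swap_val v w (τ i)
  rw [Fin.lt_def] at hlt1 hlt2
  have hno : ¬((τ ⟨i.1 + 1, h⟩).1 < (τ j).1 ∧ (τ j).1 < (τ i).1) := fun hc =>
    hA ⟨i, j, h, hij, Fin.lt_def.mpr hc.1, Fin.lt_def.mpr hc.2⟩
  have key : (τ j).1 = w.1 ∨ (τ ⟨i.1 + 1, h⟩).1 = w.1 := by omega
  rcases key with hy | hx
  · have hj0 : j = ⟨0, Nat.succ_pos _⟩ :=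
      τ.injective (show τ j = τ ⟨0, Nat.succ_pos _⟩ by rw [h0]; exact Fin.ext hy)
    have := congrArg Fin.val hj0
    simp only [] at this
    omega
  · have hi0 : (⟨i.1 + 1, h⟩ : Fin (n + 2)) = ⟨0, Nat.succ_pos _⟩ :=
      τ.injective (show τ _ = τ ⟨0, Nat.succ_pos _⟩ by rw [h0]; exact Fin.ext hx)
    have := congrArg Fin.val hi0
    simp only [] at this
    omega

lemma swap_cond_bwd (hw : w.1 = v.1 + 1) (τ : Perm (Fin (n + 2))) (hA : Avoids31d2 τ)
    (h0 : τ ⟨0, Nat.succ_pos _⟩ = w) :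
    ((Equiv.swap v w) (τ ⟨1, Nat.succ_lt_succ (Nat.succ_pos _)⟩)).1 + 1 ≠ v.1 := by
  have hfg := first_gap τ hA
  rw [h0] at hfg
  have H := swap_val v w (τ ⟨1, Nat.succ_lt_succ (Nat.succ_pos _)⟩)
  omega

end patterns

section cards

variable {n : ℕ}

lemma del_card (a : Fin (n + 2)) (b : Fin (n + 1)) (hb : b.1 + 1 = a.1) :
    Nat.card {π : Perm (Fin (n + 2)) // Avoids31d2 π ∧ π ⟨0, Nat.succ_pos _⟩ = a ∧
      π ⟨1, Nat.succ_lt_succ (Nat.succ_pos _)⟩ = Fin.castSucc b} = F n b := by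
  rw [F]
  apply Nat.card_congr
  have hsb : a.succAbove b = Fin.castSucc b :=
    Fin.succAbove_of_castSucc_lt _ _ (by rw [Fin.lt_def]; exact (by omega : b.1 < a.1))
  have hone : ((⟨0, Nat.succ_pos n⟩ : Fin (n + 1)).succ) =
      (⟨1, Nat.succ_lt_succ (Nat.succ_pos _)⟩ : Fin (n + 2)) := rfl
  refine ⟨fun π => ⟨del a π.1, ?_, ?_⟩, fun σ => ⟨ins a σ.1, ?_, ?_, ?_⟩, ?_, ?_⟩
  · -- del avoids
    obtain ⟨π, hA, h0, h1⟩ := π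
    have hd0 : del a π ⟨0, Nat.succ_pos n⟩ = b := by
      apply Fin.succAbove_right_injective (p := a)
      rw [del_apply a π h0, hsb, hone, h1]
    have := (avoids_ins a b hb (del a π) hd0)
    rw [ins_del a π h0] at this
    exact this.mp hA
  · -- del first val
    obtain ⟨π, hA, h0, h1⟩ := π
    apply Fin.succAbove_right_injective (p := a)
    rw [del_apply a π h0, hsb, hone, h1]
  · -- ins avoids
    obtain ⟨σ, hA, h0⟩ := σ
    exact (avoids_ins a b hb σ h0).mpr hA
  · exact ins_zero a σ.1
  · obtain ⟨σ, hA, h0⟩ := σ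
    show ins a σ _ = _
    rw [← hone, ins_succ, h0, hsb]
  · rintro ⟨π, hA, h0, h1⟩
    exact Subtype.ext (ins_del a π h0)
  · rintro ⟨σ, hA, h0⟩
    exact Subtype.ext (del_ins a σ)

lemma swap_card (v w : Fin (n + 2)) (hw : w.1 = v.1 + 1) :
    Nat.card {π : Perm (Fin (n + 2)) // Avoids31d2 π ∧ π ⟨0, Nat.succ_pos _⟩ = v ∧
      (π ⟨1, Nat.succ_lt_succ (Nat.succ_pos _)⟩).1 + 1 ≠ v.1} = F (n + 1) w := by
  rw [F]
  apply Nat.card_congr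
  have hinv : ∀ π : Perm (Fin (n + 2)), (π.trans (Equiv.swap v w)).trans (Equiv.swap v w) = π := by
    intro π
    apply Equiv.ext
    intro x
    simp [Equiv.swap_apply_self]
  refine ⟨fun π => ⟨π.1.trans (Equiv.swap v w), ?_, ?_⟩,
    fun τ => ⟨τ.1.trans (Equiv.swap v w), ?_, ?_, ?_⟩, ?_, ?_⟩
  · obtain ⟨π, hA, h0, h1⟩ := π
    exact swap_avoid_fwd v w hw π hA h0 h1
  · obtain ⟨π, hA, h0, h1⟩ := π
    show (Equiv.swap v w) (π _) = w
    rw [h0, Equiv.swap_apply_left]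
  · obtain ⟨τ, hA, h0⟩ := τ
    exact swap_avoid_bwd v w hw τ hA h0
  · obtain ⟨τ, hA, h0⟩ := τ
    show (Equiv.swap v w) (τ _) = v
    rw [h0, Equiv.swap_apply_right]
  · obtain ⟨τ, hA, h0⟩ := τ
    exact swap_cond_bwd v w hw τ hA h0
  · rintro ⟨π, hA, h0, h1⟩
    exact Subtype.ext (hinv π)
  · rintro ⟨τ, hA, h0⟩
    exact Subtype.ext (hinv τ)

end cards

lemma card_split {α : Type*} [Fintype α] (p q : α → Prop) [DecidablePred p] [DecidablePred q] :
    Nat.card {x // p x} = Nat.card {x // p x ∧ q x} + Nat.card {x // p x ∧ ¬ q x} := by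
  simp only [Nat.card_eq_fintype_card]
  rw [Fintype.card_subtype, Fintype.card_subtype, Fintype.card_subtype]
  rw [← Finset.filter_filter, ← Finset.filter_filter]
  exact (Finset.card_filter_add_card_filter_not
    (s := Finset.univ.filter p) (p := q)).symm

lemma F_rec {n : ℕ} (v w : Fin (n + 2)) (b : Fin (n + 1)) (hw : w.1 = v.1 + 1)
    (hb : b.1 + 1 = v.1) : F (n + 1) v = F (n + 1) w + F n b := by
  rw [F, card_split (p := fun π : Perm (Fin (n + 2)) => Avoids31d2 π ∧ π ⟨0, Nat.succ_pos _⟩ = v)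
    (q := fun π => (π ⟨1, Nat.succ_lt_succ (Nat.succ_pos _)⟩).1 + 1 = v.1)]
  rw [Nat.add_comm]
  congr 1
  · rw [← swap_card v w hw]
    apply Nat.card_congr
    exact Equiv.subtypeEquivRight (fun π => by tauto)
  · rw [← del_card v b hb]
    apply Nat.card_congr
    apply Equiv.subtypeEquivRight
    intro π
    have : (π ⟨1, Nat.succ_lt_succ (Nat.succ_pos _)⟩).1 + 1 = v.1 ↔
        π ⟨1, Nat.succ_lt_succ (Nat.succ_pos _)⟩ = Fin.castSucc b := by
      rw [Fin.ext_iff, Fin.coe_castSucc]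
      omega
    tauto

lemma F_zero_rec {n : ℕ} (v w : Fin (n + 2)) (hw : w.1 = v.1 + 1) (hv : v.1 = 0) :
    F (n + 1) v = F (n + 1) w := by
  rw [F, card_split (p := fun π : Perm (Fin (n + 2)) => Avoids31d2 π ∧ π ⟨0, Nat.succ_pos _⟩ = v)
    (q := fun π => (π ⟨1, Nat.succ_lt_succ (Nat.succ_pos _)⟩).1 + 1 = v.1)]
  have he : IsEmpty {π : Perm (Fin (n + 2)) //
      (Avoids31d2 π ∧ π ⟨0, Nat.succ_pos _⟩ = v) ∧
        (π ⟨1, Nat.succ_lt_succ (Nat.succ_pos _)⟩).1 + 1 = v.1} :=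
    ⟨fun ⟨π, _, hq⟩ => by omega⟩
  rw [Nat.card_of_isEmpty, Nat.zero_add, ← swap_card v w hw]
  apply Nat.card_congr
  exact Equiv.subtypeEquivRight (fun π => by tauto)

lemma eq_rev {n : ℕ} (π : Perm (Fin (n + 1))) (hA : Avoids31d2 π)
    (h0 : π ⟨0, Nat.succ_pos _⟩ = Fin.last n) : ∀ i : Fin (n + 1), (π i).1 = n - i.1 := by
  suffices H : ∀ m, ∀ i : Fin (n + 1), i.1 = m → (π i).1 = n - i.1 by
    exact fun i => H i.1 i rfl
  intro m
  induction m using Nat.strong_induction_on with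
  | _ m IH =>
    intro i him
    rcases Nat.eq_zero_or_pos m with hm0 | hmp
    · have : i = ⟨0, Nat.succ_pos _⟩ := Fin.ext (show i.1 = 0 by omega)
      rw [this, h0]
      show n = n - 0
      omega
    · obtain ⟨m', rfl⟩ : ∃ m', m = m' + 1 := ⟨m - 1, by omega⟩
      have hin : i.1 < n + 1 := i.isLt
      set i' : Fin (n + 1) := ⟨m', by omega⟩ with hi'
      have hIHi' : (π i').1 = n - m' := IH m' (by omega) i' rfl
      -- step 1 : (π i).1 ≥ n - i.1
      have hge : n - i.1 ≤ (π i).1 := by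
        by_contra hlt
        push_neg at hlt
        have hnm : m' + 1 ≤ n := by omega
        set u : Fin (n + 1) := ⟨n - i.1, by omega⟩ with hu
        set p := π.symm u with hp
        have hpu : π p = u := π.apply_symm_apply u
        have hpgt : i.1 < p.1 := by
          rcases Nat.lt_or_ge p.1 i.1 with hc | hc
          · exfalso
            have : (π p).1 = n - p.1 := IH p.1 (by omega) p rfl
            rw [hpu] at this
            have h2 : n - i.1 = n - p.1 := this
            omega
          · rcases Nat.eq_or_lt_of_le hc with hc2 | hc2
            · exfalso
              have : p = i := Fin.ext hc2.symm
              rw [this] at hpu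
              have h2 : (π i).1 = n - i.1 := congrArg Fin.val hpu
              omega
            · exact hc2
        have hidx : (⟨i'.1 + 1, by show m' + 1 < n + 1; omega⟩ : Fin (n + 1)) = i :=
          Fin.ext (show m' + 1 = i.1 by omega)
        refine hA ⟨i', p, show m' + 1 < n + 1 by omega, show m' + 1 < p.1 by omega, ?_, ?_⟩
        · rw [hidx, hpu, Fin.lt_def]
          exact hlt
        · rw [hpu, Fin.lt_def]
          show n - i.1 < (π i').1
          rw [him, hIHi']
          omega
      -- step 2 : equality
      by_contra hne
      have hgt : n - i.1 < (π i).1 := by omega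
      have hpin : (π i).1 < n + 1 := (π i).isLt
      set j' : Fin (n + 1) := ⟨n - (π i).1, by omega⟩ with hj'
      have hIHj : (π j').1 = n - j'.1 := IH j'.1 (by simp [hj']; omega) j' rfl
      have : π j' = π i := by
        apply Fin.ext
        rw [hIHj]
        simp only [hj']
        omega
      have := π.injective this
      have := congrArg Fin.val this
      simp only [hj'] at this
      omega

lemma F_last (n : ℕ) : F n (Fin.last n) = 1 := by
  rw [F, Nat.card_eq_one_iff_unique]
  constructor
  · constructor
    rintro ⟨π, hπA, hπ0⟩ ⟨ρ, hρA, hρ0⟩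
    apply Subtype.ext
    apply Equiv.ext
    intro i
    apply Fin.ext
    rw [eq_rev π hπA hπ0 i, eq_rev ρ hρA hρ0 i]
  · refine ⟨⟨Fin.revPerm, ?_, ?_⟩⟩
    · rintro ⟨i, j, h, hij, h1, h2⟩
      simp only [Fin.revPerm_apply] at h1
      rw [Fin.rev_lt_rev, Fin.lt_def] at h1
      have h1' : j.1 < i.1 + 1 := h1
      omega
    · apply Fin.ext
      simp [Fin.rev]


lemma binom_key1 (n k : ℕ) (hk : k = 1) :
    ((2 * (n + 1) + 1 - (k + 1)).choose (n + 1) : ℤ) - ((2 * (n + 1) + 1 - (k + 1)).choose (n + 2))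
      = ((2 * (n + 1) + 1 - k).choose (n + 1) : ℤ) - ((2 * (n + 1) + 1 - k).choose (n + 2)) := by
  subst hk
  have e1 : 2 * (n + 1) + 1 - 1 = (2 * n + 1) + 1 := by omega
  have e2 : 2 * (n + 1) + 1 - (1 + 1) = 2 * n + 1 := by omega
  rw [e1, e2, Nat.choose_succ_succ (2 * n + 1) n, Nat.choose_succ_succ (2 * n + 1) (n + 1)]
  have psymm : (2 * n + 1).choose n = (2 * n + 1).choose (n + 1) := by
    have h : (2 * n + 1) - (n + 1) = n := by omega
    have hs := Nat.choose_symm (show n + 1 ≤ 2 * n + 1 by omega)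
    rw [h] at hs
    exact hs
  rw [psymm]
  push_cast
  ring

lemma binom_key2 (n k : ℕ) (h2 : 2 ≤ k) (hkn : k ≤ n + 1) :
    (((2 * (n + 1) + 1 - (k + 1)).choose (n + 1) : ℤ) - ((2 * (n + 1) + 1 - (k + 1)).choose (n + 2)))
      + (((2 * n + 1 - (k - 1)).choose n : ℤ) - ((2 * n + 1 - (k - 1)).choose (n + 1)))
      = ((2 * (n + 1) + 1 - k).choose (n + 1) : ℤ) - ((2 * (n + 1) + 1 - k).choose (n + 2)) := by
  have e1 : 2 * (n + 1) + 1 - k = (2 * (n + 1) - k) + 1 := by omega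
  have e2 : 2 * (n + 1) + 1 - (k + 1) = 2 * (n + 1) - k := by omega
  have e3 : 2 * n + 1 - (k - 1) = 2 * (n + 1) - k := by omega
  rw [e1, e2, e3, Nat.choose_succ_succ (2 * (n + 1) - k) n,
    Nat.choose_succ_succ (2 * (n + 1) - k) (n + 1)]
  push_cast
  ring


set_option maxHeartbeats 1000000 in
lemma F_formula (n : ℕ) : ∀ k : ℕ, (h1 : 1 ≤ k) → (h2 : k ≤ n + 1) →
    ((F n ⟨k - 1, by omega⟩ : ℕ) : ℤ)
      = ((2 * n + 1 - k).choose n : ℤ) - ((2 * n + 1 - k).choose (n + 1) : ℤ) := by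
  induction n with
  | zero =>
    intro k h1 h2
    have hk : k = 1 := by omega
    subst hk
    have h : (⟨1 - 1, by omega⟩ : Fin 1) = Fin.last 0 := rfl
    rw [h, F_last]
    norm_num
  | succ n IHn =>
    suffices H : ∀ d k, (h1 : 1 ≤ k) → (h2 : k ≤ n + 2) → n + 2 - k = d →
        ((F (n + 1) ⟨k - 1, by omega⟩ : ℕ) : ℤ)
          = ((2 * (n + 1) + 1 - k).choose (n + 1) : ℤ)
            - ((2 * (n + 1) + 1 - k).choose (n + 2) : ℤ) by
      exact fun k h1 h2 => H (n + 2 - k) k h1 h2 rfl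
    intro d
    induction d with
    | zero =>
      intro k h1 h2 hd
      have hk : k = n + 2 := by omega
      subst hk
      have h : (⟨n + 2 - 1, by omega⟩ : Fin (n + 2)) = Fin.last (n + 1) := rfl
      rw [h, F_last]
      have hM : 2 * (n + 1) + 1 - (n + 2) = n + 1 := by omega
      rw [hM, Nat.choose_self, Nat.choose_succ_self]
      norm_num
    | succ d IHd =>
      intro k h1 h2 hd
      have hkn : k ≤ n + 1 := by omega
      have hpv : k - 1 < n + 2 := by omega
      have hpw : k < n + 2 := by omega
      have hw : (⟨k, hpw⟩ : Fin (n + 2)).1 = (⟨k - 1, hpv⟩ : Fin (n + 2)).1 + 1 := by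
        show k = (k - 1) + 1; omega
      have hIHw := IHd (k + 1) (by omega) (by omega) (by omega)
      have hww : (⟨k + 1 - 1, by omega⟩ : Fin (n + 2)) = ⟨k, hpw⟩ :=
        Fin.ext (show k + 1 - 1 = k by omega)
      rw [hww] at hIHw
      rcases Nat.eq_or_lt_of_le h1 with hk1 | hk2
      · -- k = 1
        have hv0 : (⟨k - 1, hpv⟩ : Fin (n + 2)).1 = 0 := by show k - 1 = 0; omega
        rw [F_zero_rec ⟨k - 1, hpv⟩ ⟨k, hpw⟩ hw hv0, hIHw]
        exact binom_key1 n k hk1.symm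
      · -- 2 ≤ k
        have hpb : k - 2 < n + 1 := by omega
        have hbv : (⟨k - 2, hpb⟩ : Fin (n + 1)).1 + 1 = (⟨k - 1, hpv⟩ : Fin (n + 2)).1 := by
          show (k - 2) + 1 = k - 1; omega
        have hIHb := IHn (k - 1) (by omega) (by omega)
        have hbb : (⟨k - 1 - 1, by omega⟩ : Fin (n + 1)) = ⟨k - 2, hpb⟩ :=
          Fin.ext (show k - 1 - 1 = k - 2 by omega)
        rw [hbb] at hIHb
        rw [F_rec ⟨k - 1, hpv⟩ ⟨k, hpw⟩ ⟨k - 2, hpb⟩ hw hbv]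
        push_cast
        rw [hIHw, hIHb]
        exact binom_key2 n k hk2 hkn

theorem ballot_distribution (n k : ℕ) (hn : 1 ≤ n) (hk1 : 1 ≤ k) (hkn : k ≤ n) :
    n * Nat.card {π : Equiv.Perm (Fin n) // Avoids31d2 π ∧ π ⟨0, by omega⟩ = ⟨k - 1, by omega⟩} = k * (2 * n - k - 1).choose (n - 1) := by
  obtain ⟨m, rfl⟩ : ∃ m, n = m + 1 := ⟨n - 1, by omega⟩
  have hc : Nat.card {π : Equiv.Perm (Fin (m + 1)) // Avoids31d2 π ∧
      π ⟨0, by omega⟩ = ⟨k - 1, by omega⟩} = F m ⟨k - 1, by omega⟩ := rfl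
  rw [hc]
  have hF := F_formula m k hk1 (by omega)
  have harg : 2 * (m + 1) - k - 1 = 2 * m + 1 - k := by omega
  rw [harg]
  set M := 2 * m + 1 - k with hM
  have hchoose : M.choose (m + 1) * (m + 1) = M.choose m * (M - m) := Nat.choose_succ_right_eq M m
  have hMm : M - m = m + 1 - k := by omega
  rw [hMm] at hchoose
  -- move to ℤ
  have hZ : (M.choose (m + 1) : ℤ) * (m + 1) = (M.choose m : ℤ) * ((m : ℤ) + 1 - k) := by
    have := congrArg (fun t : ℕ => (t : ℤ)) hchoose
    push_cast at this
    rw [this]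
    have : ((m + 1 - k : ℕ) : ℤ) = (m : ℤ) + 1 - k := by
      push_cast [Nat.cast_sub (by omega : k ≤ m + 1)]
      ring
    rw [this]
  have goalZ : ((m + 1 : ℕ) : ℤ) * (F m ⟨k - 1, by omega⟩ : ℤ) = (k : ℤ) * (M.choose m : ℤ) := by
    rw [hF]
    push_cast
    linear_combination (-1 : ℤ) * hZ
  exact_mod_cast goalZ
end
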